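/- Let (V, +, ·) and (V, +, *) be two commutative associative radical F-algebra structures on the same F-vector space V, with corresponding abelian regular subgroups T₁, T₂ of Aff(V) given by the circle translations. If φ : (V, +, ·) → (V, +, *) is an F-algebra isomorphism, then T₂ = φ⁻¹ T₁ φ, i.e. T₁ and T₂ are conjugate under GL(V). -/
import Mathlib


theorem stmt {F V : Type*} [Field F] [AddCommGroup V] [Module F V]
    (mul₁ mul₂ : V →ₗ[F] V →ₗ[F] V)
    (hc₁ : ∀ x y : V, mul₁ x y = mul₁ y x)
    (ha₁ : ∀ x y z : V, mul₁ (mul₁ x y) z = mul₁ x (mul₁ y z))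
    (hrad₁ : ∀ x : V, ∃ y : V, x + y + mul₁ x y = 0)
    (hc₂ : ∀ x y : V, mul₂ x y = mul₂ y x)
    (ha₂ : ∀ x y z : V, mul₂ (mul₂ x y) z = mul₂ x (mul₂ y z))
    (hrad₂ : ∀ x : V, ∃ y : V, x + y + mul₂ x y = 0)
    (T₁ T₂ : Subgroup (V ≃ᵃ[F] V))
    (hT₁ : ∀ g : V ≃ᵃ[F] V, g ∈ T₁ ↔ ∃ x : V, ∀ y : V, g y = y + x + mul₁ y x)
    (hT₂ : ∀ g : V ≃ᵃ[F] V, g ∈ T₂ ↔ ∃ x : V, ∀ y : V, g y = y + x + mul₂ y x)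
    (φ : V ≃ₗ[F] V)
    (hφ : ∀ x y : V, φ (mul₁ x y) = mul₂ (φ x) (φ y))
    (φA : V ≃ᵃ[F] V) (hφA : ∀ x : V, φA x = φ x) :
    ∀ g : V ≃ᵃ[F] V, g ∈ T₂ ↔ ∃ h ∈ T₁, g = φA * h * φA⁻¹ := by
  have hsymm : ∀ y : V, φA⁻¹ y = φ.symm y := by
    intro y
    have h1 : φA (φ.symm y) = y := by rw [hφA]; simp
    show φA.symm y = _
    exact φA.toEquiv.symm_apply_eq.mpr h1.symm
  intro g
  constructor
  · intro hg
    obtain ⟨x, hx⟩ := (hT₂ g).mp hg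
    refine ⟨φA⁻¹ * g * φA, ?_, by group⟩
    rw [hT₁]
    refine ⟨φ.symm x, fun y => ?_⟩
    have h2 : (φA⁻¹ * g * φA) y = φA⁻¹ (g (φA y)) := rfl
    rw [h2, hφA, hx, hsymm]
    apply φ.injective
    simp [map_add, hφ]
  · rintro ⟨h, hh, rfl⟩
    obtain ⟨x, hx⟩ := (hT₁ h).mp hh
    rw [hT₂]
    refine ⟨φ x, fun y => ?_⟩
    have h2 : (φA * h * φA⁻¹) y = φA (h (φA⁻¹ y)) := rfl
    rw [h2, hsymm, hx, hφA]
    simp [map_add, hφ]
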